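/- Let 𝒜_C = {p, p'}, ℰ_C = {not p, not ¬p}, let Π_G = (𝒜_C, ℰ_C, {p' ← ¬not ¬p}) and Π_S = (𝒜_C, ℰ_C, {p' ← not p}). Then Π_G and Π_S are not strongly equivalent: the pair (∅, {p}) belongs to 𝒮ℰ_{Π_G}({not p}) but not to 𝒮ℰ_{Π_S}({not p}); moreover, for the epistemic-negation-free program Π = (𝒜_C, ℰ_C, {p ← ¬p'}) one has CWV(Π_G ∪ Π) = { { {p} } } while CWV(Π_S ∪ Π) = { { {p'} } }. -/

import Mathlib

variable {V : Type}

/-- A (default-negation) literal: an atom or its default negation. -/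
inductive Lit (V : Type) : Type
  | pos (a : V) : Lit V
  | neg (a : V) : Lit V

namespace Lit

/-- `I ⊨ ℓ`. -/
def sat (I : Set V) : Lit V → Prop
  | pos a => a ∈ I
  | neg a => a ∉ I

/-- The complementary literal (so that `I ⊨ ¬ℓ` iff `I ⊨ ℓ.flip`). -/
def flip : Lit V → Lit V
  | pos a => neg a
  | neg a => pos a

/-- The underlying atom of a literal. -/
def atom : Lit V → V
  | pos a => a
  | neg a => a

end Lit

/-- A standard (ASP) rule `head ← pos, {¬ℓ | ℓ ∈ neg}`; the set `neg` collects the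
literals occurring under one extra default negation in the body (so an atom `a ∈ pos`
is a positive body atom, `Lit.pos c ∈ neg` encodes the body element `¬c`, and
`Lit.neg d ∈ neg` encodes the doubly negated body element `¬¬d`). -/
structure Rule (V : Type) : Type where
  head : Set V
  pos : Set V
  neg : Set (Lit V)

namespace Rule

/-- The rule only uses atoms from `A`. -/
def wf (r : Rule V) (A : Set V) : Prop :=
  r.head ⊆ A ∧ r.pos ⊆ A ∧ ∀ ℓ ∈ r.neg, ℓ.atom ∈ A

/-- `I` is a model of the rule. -/
def sat (I : Set V) (r : Rule V) : Prop :=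
  (r.pos ⊆ I ∧ ∀ ℓ ∈ r.neg, ¬ ℓ.sat I) → ∃ a ∈ r.head, a ∈ I

/-- `X` satisfies the GL-reduct of the rule w.r.t. `Y`: if the rule survives the
reduct (no negated body literal is satisfied by `Y`), then `X` satisfies the
remaining rule `head ← pos`. -/
def redSat (Y X : Set V) (r : Rule V) : Prop :=
  (∀ ℓ ∈ r.neg, ¬ ℓ.sat Y) → (r.pos ⊆ X → ∃ a ∈ r.head, a ∈ X)

end Rule

/-- A ground logic program `(𝒜, ℛ)`. -/
structure Program (V : Type) : Type where
  A : Set V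
  R : Set (Rule V)

namespace Program

def wf (P : Program V) : Prop := ∀ r ∈ P.R, r.wf P.A

/-- `I ⊨ P`. -/
def model (P : Program V) (I : Set V) : Prop := ∀ r ∈ P.R, r.sat I

/-- `X ⊨ P^Y` (the GL-reduct). -/
def redModel (P : Program V) (Y X : Set V) : Prop := ∀ r ∈ P.R, r.redSat Y X

/-- `M` is an answer set of `P`. -/
def answerSet (P : Program V) (M : Set V) : Prop :=
  M ⊆ P.A ∧ P.model M ∧ ¬ ∃ M', M' ⊂ M ∧ P.redModel M M'

/-- `AS(P)`, the set of answer sets. -/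
def AS (P : Program V) : Set (Set V) := {M | P.answerSet M}

/-- The set of SE-models `(X,Y)` with `X ⊆ Y ⊆ 𝒜`, `Y ⊨ P` and `X ⊨ P^Y`. -/
def SE (P : Program V) : Set (Set V × Set V) :=
  {p | p.1 ⊆ p.2 ∧ p.2 ⊆ P.A ∧ P.model p.2 ∧ P.redModel p.2 p.1}

/-- Componentwise union of programs. -/
def union (P₁ P₂ : Program V) : Program V := ⟨P₁.A ∪ P₂.A, P₁.R ∪ P₂.R⟩

/-- Strong equivalence of plain logic programs. -/
def strongEq (P₁ P₂ : Program V) : Prop :=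
  ∀ P : Program V, P.wf → (P₁.union P).AS = (P₂.union P).AS

end Program

/-- An ELP rule `head ← opos, ¬oneg, not epos, ¬ not eneg`: epistemic literals `not ℓ`
are identified with the literal `ℓ` they negate; `epos` collects the literals occurring
under plain epistemic negation and `eneg` those occurring under default-negated
epistemic negation. -/
structure ERule (V : Type) : Type where
  head : Set V
  opos : Set V
  oneg : Set (Lit V)
  epos : Set (Lit V)
  eneg : Set (Lit V)

namespace ERule

/-- The rule only uses atoms from `A` and epistemic literals from `E`. -/
def wf (r : ERule V) (A : Set V) (E : Set (Lit V)) : Prop :=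
  r.head ⊆ A ∧ r.opos ⊆ A ∧ (∀ ℓ ∈ r.oneg, ℓ.atom ∈ A) ∧ r.epos ⊆ E ∧ r.eneg ⊆ E

/-- The rule of the epistemic reduct w.r.t. guess `Φ` (meaningful when no `eneg`
literal belongs to `Φ`, in which case: epistemic literals `not ℓ ∈ Φ` become `⊤`,
the remaining `not ℓ` in `epos` become `¬ℓ`, and `¬ not ℓ` in `eneg` becomes `¬¬ℓ`,
i.e. `¬(ℓ.flip)`, reading triple negations as single ones). -/
def reduct (r : ERule V) (Φ : Set (Lit V)) : Rule V :=
  ⟨r.head, r.opos, r.oneg ∪ (r.epos \ Φ) ∪ (Lit.flip '' r.eneg)⟩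

/-- The underlying plain rule of an epistemic-negation-free ELP rule. -/
def toRule (r : ERule V) : Rule V := ⟨r.head, r.opos, r.oneg⟩

end ERule

/-- A plain rule viewed as an ELP rule. -/
def Rule.toERule (r : Rule V) : ERule V := ⟨r.head, r.pos, r.neg, ∅, ∅⟩

/-- An epistemic logic program `(𝒜, ℰ, ℛ)`. -/
structure ELP (V : Type) : Type where
  A : Set V
  E : Set (Lit V)
  R : Set (ERule V)

/-- `I` is `Φ`-compatible w.r.t. `E`. -/
def compatible (E Φ : Set (Lit V)) (I : Set (Set V)) : Prop :=
  I.Nonempty ∧ (∀ ℓ ∈ Φ, ∃ J ∈ I, ¬ ℓ.sat J) ∧ (∀ ℓ ∈ E \ Φ, ∀ J ∈ I, ℓ.sat J)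

/-- `Φ` is realizable in the set `I` of interpretations (w.r.t. `E`). -/
def realizableIn (E Φ : Set (Lit V)) (I : Set (Set V)) : Prop :=
  ∃ I', I' ⊆ I ∧ compatible E Φ I'

/-- A guess `Φ` is consistent w.r.t. `E`: whenever `E` contains both `not a` and
`not ¬a`, `Φ` contains at least one of them. -/
def consistentGuess (E Φ : Set (Lit V)) : Prop :=
  ∀ a : V, Lit.pos a ∈ E → Lit.neg a ∈ E → (Lit.pos a ∈ Φ ∨ Lit.neg a ∈ Φ)

namespace ELP

/-- Well-formedness: `E` consists of epistemic literals over `A`, and every rule is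
over `A` and `E`. -/
def wf (P : ELP V) : Prop :=
  (∀ ℓ ∈ P.E, ℓ.atom ∈ P.A) ∧ ∀ r ∈ P.R, r.wf P.A P.E

/-- An epistemic-negation-free (plain ASP) program viewed as an ELP. -/
def isASP (P : ELP V) : Prop := P.E = ∅ ∧ ∀ r ∈ P.R, r.epos = ∅ ∧ r.eneg = ∅

/-- Componentwise union of ELPs. -/
def union (P₁ P₂ : ELP V) : ELP V := ⟨P₁.A ∪ P₂.A, P₁.E ∪ P₂.E, P₁.R ∪ P₂.R⟩

/-- The epistemic reduct `P^Φ`: rules with some `eneg` literal in `Φ` are deleted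
(their body contains `¬⊤`), the remaining rules are reduced. -/
def eReduct (P : ELP V) (Φ : Set (Lit V)) : Program V :=
  ⟨P.A, {q | ∃ r ∈ P.R, (∀ ℓ ∈ r.eneg, ℓ ∉ Φ) ∧ q = r.reduct Φ}⟩

/-- `M` is a candidate world view of `P` w.r.t. the guess `Φ`. -/
def isCWVwrt (P : ELP V) (Φ : Set (Lit V)) (M : Set (Set V)) : Prop :=
  Φ ⊆ P.E ∧ M = (P.eReduct Φ).AS ∧ compatible P.E Φ M

/-- `M` is a candidate world view of `P`. -/
def isCWV (P : ELP V) (M : Set (Set V)) : Prop := ∃ Φ, P.isCWVwrt Φ M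

/-- `M` is a world view of `P`: a CWV whose associated guess is subset-maximal. -/
def isWV (P : ELP V) (M : Set (Set V)) : Prop :=
  ∃ Φ, P.isCWVwrt Φ M ∧ ∀ Φ' M', P.isCWVwrt Φ' M' → ¬ Φ ⊂ Φ'

/-- `Φ` is realizable in `P`: realizable in the set of models of `P^Φ`. -/
def realizable (P : ELP V) (Φ : Set (Lit V)) : Prop :=
  realizableIn P.E Φ {I | I ⊆ P.A ∧ (P.eReduct Φ).model I}

/-- The SE-function of `P`: `SE(Π^Φ)` if `Φ` is realizable in `P`, and `∅` otherwise. -/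
def SEfun (P : ELP V) (Φ : Set (Lit V)) : Set (Set V × Set V) :=
  {p | P.realizable Φ ∧ p ∈ (P.eReduct Φ).SE}

/-- CWV-equivalence. -/
def cwvEq (P₁ P₂ : ELP V) : Prop := ∀ M, P₁.isCWV M ↔ P₂.isCWV M

/-- WV-equivalence. -/
def wvEq (P₁ P₂ : ELP V) : Prop := ∀ M, P₁.isWV M ↔ P₂.isWV M

/-- Strong ELP-CWV-equivalence. -/
def strongELPCWVEq (P₁ P₂ : ELP V) : Prop :=
  ∀ Q : ELP V, Q.wf → cwvEq (P₁.union Q) (P₂.union Q)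

/-- Strong ELP-WV-equivalence. -/
def strongELPWVEq (P₁ P₂ : ELP V) : Prop :=
  ∀ Q : ELP V, Q.wf → wvEq (P₁.union Q) (P₂.union Q)

/-- Strong ASP-CWV-equivalence. -/
def strongASPCWVEq (P₁ P₂ : ELP V) : Prop :=
  ∀ Q : ELP V, Q.wf → Q.isASP → cwvEq (P₁.union Q) (P₂.union Q)

/-- Strong ASP-WV-equivalence. -/
def strongASPWVEq (P₁ P₂ : ELP V) : Prop :=
  ∀ Q : ELP V, Q.wf → Q.isASP → wvEq (P₁.union Q) (P₂.union Q)

end ELP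

/-- The Gelfond-CWA program `p' ← ¬ not ¬p` over `𝒜 = {p, p'}`, `ℰ = {not p, not ¬p}`. -/
def GelfondCWA (p p' : V) : ELP V :=
  ⟨{p, p'}, {Lit.pos p, Lit.neg p}, {⟨{p'}, ∅, ∅, ∅, {Lit.neg p}⟩}⟩

/-- The Shen-Eiter-CWA program `p' ← not p` over `𝒜 = {p, p'}`, `ℰ = {not p, not ¬p}`. -/
def ShenEiterCWA (p p' : V) : ELP V :=
  ⟨{p, p'}, {Lit.pos p, Lit.neg p}, {⟨{p'}, ∅, ∅, {Lit.pos p}, ∅⟩}⟩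

/-
A guess decides which rules survive the epistemic reduct. For Gelfond's rule
`p' ← ¬ not ¬p` the only guess whose reduct has answer sets compatible with it is `{not ¬p}`,
which deletes the rule, so together with `p ← ¬p'` the unique world is `{p}`. For Shen and
Eiter's rule `p' ← not p` it is `{not p}`, which turns the rule into the fact `p'`, and the
unique world is `{p'}`. Under the guess `{not p}` the two reducts are `p' ← ¬p` and `p'`, and
only the first one is satisfied by `{p}`.
-/

namespace Rule

variable {a b : V} {I X Y : Set V}

/-- The rule `a ← ¬b`. -/
def ifNot (a b : V) : Rule V := ⟨{a}, ∅, {Lit.pos b}⟩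

def fact (a : V) : Rule V := ⟨{a}, ∅, ∅⟩

@[simp]
lemma sat_ifNot : (ifNot a b).sat I ↔ (b ∉ I → a ∈ I) := by
  simp [sat, ifNot, Lit.sat]

@[simp]
lemma redSat_ifNot : (ifNot a b).redSat Y X ↔ (b ∉ Y → a ∈ X) := by
  simp [redSat, ifNot, Lit.sat]

@[simp]
lemma sat_fact : (fact a).sat I ↔ a ∈ I := by
  simp [sat, fact]

@[simp]
lemma redSat_fact : (fact a).redSat Y X ↔ a ∈ X := by
  simp [redSat, fact]

end Rule

namespace Program

variable {P : Program V} {M X : Set V} {a b : V} {A : Set V}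

lemma answerSet.eq_of_redModel (hM : P.answerSet M) (hXM : X ⊆ M) (hX : P.redModel M X) :
    X = M := by
  by_contra hne
  exact hM.2.2 ⟨X, hXM.ssubset_of_ne hne, hX⟩

lemma singleton_mem_AS (ha : a ∈ P.A) (hmod : P.model {a}) (hred : ¬ P.redModel {a} ∅) :
    {a} ∈ P.AS := by
  refine ⟨Set.singleton_subset_iff.mpr ha, hmod, ?_⟩
  rintro ⟨M', hM', hM'red⟩
  rw [Set.ssubset_singleton_iff] at hM'
  exact hred (hM' ▸ hM'red)

lemma AS_ifNot (hab : a ≠ b) (ha : a ∈ A) : (⟨A, {Rule.ifNot a b}⟩ : Program V).AS = {{a}} := by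
  ext M
  simp only [Set.mem_singleton_iff]
  constructor
  · intro hM
    have hb : b ∉ M := fun hb => by
      have hM₀ : ∅ = M := hM.eq_of_redModel (Set.empty_subset M) (by simp [redModel, hb])
      simp [← hM₀] at hb
    have haM : a ∈ M := by simpa [model, hb] using hM.2.1
    exact (hM.eq_of_redModel (Set.singleton_subset_iff.mpr haM) (by simp [redModel])).symm
  · rintro rfl
    exact singleton_mem_AS ha (by simp [model]) (by simp [redModel, Ne.symm hab])

lemma AS_fact_ifNot (ha : a ∈ A) :
    (⟨A, {Rule.fact a, Rule.ifNot b a}⟩ : Program V).AS = {{a}} := by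
  ext M
  simp only [Set.mem_singleton_iff]
  constructor
  · intro hM
    have haM : a ∈ M := Rule.sat_fact.mp (hM.2.1 _ (Set.mem_insert _ _))
    exact (hM.eq_of_redModel (Set.singleton_subset_iff.mpr haM) (by simp [redModel, haM])).symm
  · rintro rfl
    exact singleton_mem_AS ha (by simp [model]) (by simp [redModel])

lemma singleton_mem_AS_ifNot_pair (hab : a ≠ b) (ha : a ∈ A) :
    {a} ∈ (⟨A, {Rule.ifNot a b, Rule.ifNot b a}⟩ : Program V).AS :=
  singleton_mem_AS ha (by simp [model]) (by simp [redModel, Ne.symm hab])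

end Program

lemma compatible_singleton_iff {E Φ : Set (Lit V)} {J : Set V} :
    compatible E Φ {J} ↔ (∀ ℓ ∈ Φ, ¬ ℓ.sat J) ∧ ∀ ℓ ∈ E \ Φ, ℓ.sat J := by
  simp [compatible]

lemma ELP.eReduct_union (P Q : ELP V) (Φ : Set (Lit V)) :
    (P.union Q).eReduct Φ = (P.eReduct Φ).union (Q.eReduct Φ) := by
  simp only [eReduct, union, Program.union, Program.mk.injEq, true_and]
  ext q
  simp [or_and_right, exists_or]

/-- The program `Π = {p ← ¬p'}` over `𝒜_C` and `ℰ_C`. -/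
def DefaultP (p p' : V) : ELP V :=
  ⟨{p, p'}, {Lit.pos p, Lit.neg p}, {⟨{p}, ∅, {Lit.pos p'}, ∅, ∅⟩}⟩

section CWA

variable {p p' : V} {Φ : Set (Lit V)} {M : Set (Set V)}

lemma DefaultP_wf : (DefaultP p p').wf := by
  simp [DefaultP, ELP.wf, ERule.wf, Lit.atom]

lemma DefaultP_eReduct : (DefaultP p p').eReduct Φ = ⟨{p, p'}, {Rule.ifNot p p'}⟩ := by
  simp [DefaultP, ELP.eReduct, ERule.reduct, Rule.ifNot]

lemma GelfondCWA_eReduct_of_mem (h : Lit.neg p ∈ Φ) :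
    (GelfondCWA p p').eReduct Φ = ⟨{p, p'}, ∅⟩ := by
  simp [GelfondCWA, ELP.eReduct, h]

lemma GelfondCWA_eReduct_of_notMem (h : Lit.neg p ∉ Φ) :
    (GelfondCWA p p').eReduct Φ = ⟨{p, p'}, {Rule.ifNot p' p}⟩ := by
  simp [GelfondCWA, ELP.eReduct, ERule.reduct, Rule.ifNot, Lit.flip, h]

lemma ShenEiterCWA_eReduct_of_mem (h : Lit.pos p ∈ Φ) :
    (ShenEiterCWA p p').eReduct Φ = ⟨{p, p'}, {Rule.fact p'}⟩ := by
  simp [ShenEiterCWA, ELP.eReduct, ERule.reduct, Rule.fact, Set.sdiff_eq_empty, h]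

lemma ShenEiterCWA_eReduct_of_notMem (h : Lit.pos p ∉ Φ) :
    (ShenEiterCWA p p').eReduct Φ = ⟨{p, p'}, {Rule.ifNot p' p}⟩ := by
  simp [ShenEiterCWA, ELP.eReduct, ERule.reduct, Rule.ifNot, h]

lemma eReduct_union_DefaultP {P : ELP V} {R : Set (Rule V)}
    (hP : P.eReduct Φ = ⟨{p, p'}, R⟩) :
    (P.union (DefaultP p p')).eReduct Φ = ⟨{p, p'}, R ∪ {Rule.ifNot p p'}⟩ := by
  rw [ELP.eReduct_union, hP, DefaultP_eReduct]
  simp [Program.union]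

lemma isCWV_GelfondCWA_union_DefaultP_iff (hpp : p ≠ p') :
    ((GelfondCWA p p').union (DefaultP p p')).isCWV M ↔ M = {{p}} := by
  have hE : ((GelfondCWA p p').union (DefaultP p p')).E = {Lit.pos p, Lit.neg p} :=
    Set.union_self _
  have hAS {Φ} (h : Lit.neg p ∈ Φ) :
      (((GelfondCWA p p').union (DefaultP p p')).eReduct Φ).AS = {{p}} := by
    rw [eReduct_union_DefaultP (GelfondCWA_eReduct_of_mem h), Set.empty_union,
      Program.AS_ifNot hpp (by simp)]
  constructor
  · rintro ⟨Φ, -, rfl, hcomp⟩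
    by_cases h : Lit.neg p ∈ Φ
    · exact hAS h
    · have hp : {p} ∈ (((GelfondCWA p p').union (DefaultP p p')).eReduct Φ).AS := by
        rw [eReduct_union_DefaultP (GelfondCWA_eReduct_of_notMem h), Set.singleton_union,
          Set.pair_comm (Rule.ifNot p' p)]
        exact Program.singleton_mem_AS_ifNot_pair hpp (Set.mem_insert _ _)
      exact absurd rfl (hcomp.2.2 (Lit.neg p) ⟨by simp [hE], h⟩ {p} hp)
  · rintro rfl
    refine ⟨{Lit.neg p}, by simp [hE], (hAS (Set.mem_singleton _)).symm, ?_⟩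
    rw [hE, compatible_singleton_iff]
    simp [Lit.sat]

lemma isCWV_ShenEiterCWA_union_DefaultP_iff (hpp : p ≠ p') :
    ((ShenEiterCWA p p').union (DefaultP p p')).isCWV M ↔ M = {{p'}} := by
  have hE : ((ShenEiterCWA p p').union (DefaultP p p')).E = {Lit.pos p, Lit.neg p} :=
    Set.union_self _
  have hAS {Φ} (h : Lit.pos p ∈ Φ) :
      (((ShenEiterCWA p p').union (DefaultP p p')).eReduct Φ).AS = {{p'}} := by
    rw [eReduct_union_DefaultP (ShenEiterCWA_eReduct_of_mem h), Set.singleton_union,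
      Program.AS_fact_ifNot (by simp)]
  constructor
  · rintro ⟨Φ, -, rfl, hcomp⟩
    by_cases h : Lit.pos p ∈ Φ
    · exact hAS h
    · have hp' : {p'} ∈ (((ShenEiterCWA p p').union (DefaultP p p')).eReduct Φ).AS := by
        rw [eReduct_union_DefaultP (ShenEiterCWA_eReduct_of_notMem h), Set.singleton_union]
        exact Program.singleton_mem_AS_ifNot_pair hpp.symm (Set.mem_insert_of_mem _ rfl)
      exact (hpp (hcomp.2.2 (Lit.pos p) ⟨by simp [hE], h⟩ {p'} hp')).elim
  · rintro rfl
    refine ⟨{Lit.pos p}, by simp [hE], (hAS (Set.mem_singleton _)).symm, ?_⟩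
    rw [hE, compatible_singleton_iff]
    simp [Lit.sat, hpp]

lemma mem_SEfun_GelfondCWA (hpp : p ≠ p') :
    ((∅, {p}) : Set V × Set V) ∈ (GelfondCWA p p').SEfun {Lit.pos p} := by
  have hred := GelfondCWA_eReduct_of_notMem (p := p) (p' := p') (Φ := {Lit.pos p}) (by simp)
  refine ⟨⟨{{p'}}, ?_, ?_⟩, ?_⟩
  · refine Set.singleton_subset_iff.mpr ⟨by simp [GelfondCWA], ?_⟩
    rw [hred]
    simp [Program.model]
  · rw [compatible_singleton_iff]
    simp [GelfondCWA, Lit.sat, hpp]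
  · simp [hred, Program.SE, Program.model, Program.redModel]

lemma notMem_SEfun_ShenEiterCWA (hpp : p ≠ p') :
    ((∅, {p}) : Set V × Set V) ∉ (ShenEiterCWA p p').SEfun {Lit.pos p} := by
  rintro ⟨-, -, -, hmod, -⟩
  rw [ShenEiterCWA_eReduct_of_mem (Set.mem_singleton _)] at hmod
  exact hpp (by simpa [Program.model, eq_comm] using hmod)

end CWA

/-- The Gelfond-CWA and Shen-Eiter-CWA programs are not strongly
equivalent: `(∅, {p}) ∈ 𝒮ℰ_{Π_G}({not p})` but `(∅, {p}) ∉ 𝒮ℰ_{Π_S}({not p})`, and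
adding the epistemic-negation-free program `{p ← ¬p'}` yields
`CWV(Π_G ∪ Π) = {{{p}}}` while `CWV(Π_S ∪ Π) = {{{p'}}}`. -/
theorem stmt19 {V : Type} (p p' : V) (hpp : p ≠ p') :
    ¬ ELP.strongELPCWVEq (GelfondCWA p p') (ShenEiterCWA p p') ∧
    ((∅, {p}) : Set V × Set V) ∈ (GelfondCWA p p').SEfun {Lit.pos p} ∧
    ((∅, {p}) : Set V × Set V) ∉ (ShenEiterCWA p p').SEfun {Lit.pos p} ∧
    {M | ((GelfondCWA p p').union
        (ELP.mk {p, p'} {Lit.pos p, Lit.neg p}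
          {ERule.mk {p} ∅ {Lit.pos p'} ∅ ∅})).isCWV M} =
      ({{{p}}} : Set (Set (Set V))) ∧
    {M | ((ShenEiterCWA p p').union
        (ELP.mk {p, p'} {Lit.pos p, Lit.neg p}
          {ERule.mk {p} ∅ {Lit.pos p'} ∅ ∅})).isCWV M} =
      ({{{p'}}} : Set (Set (Set V))) := by
  have hG := fun M => isCWV_GelfondCWA_union_DefaultP_iff (M := M) hpp
  have hS := fun M => isCWV_ShenEiterCWA_union_DefaultP_iff (M := M) hpp
  refine ⟨fun hstrong => ?_, mem_SEfun_GelfondCWA hpp, notMem_SEfun_ShenEiterCWA hpp,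
    Set.ext hG, Set.ext hS⟩
  have hworlds : ({{p}} : Set (Set V)) = {{p'}} :=
    (hS _).mp ((hstrong _ DefaultP_wf _).mp ((hG _).mpr rfl))
  simp [hpp] at hworlds
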